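/- Let θ : ℝ³ → ℝ³ be twice continuously differentiable with I + Dθ(y) invertible for all y, and let u : ℝ³ → ℝ³ be continuously differentiable. Define Φ²_θ u : ℝ³ → ℝ³ by (Φ²_θ u)(y) = det(I + Dθ(y)) (I + Dθ(y))⁻¹ u(y + θ(y)). Then for every x ∈ ℝ³, div(Φ²_θ u)(x) = det(I + Dθ(x)) (div u)(x + θ(x)). (This is the commutation relation div ∘ Φ²_θ = Φ³_θ ∘ div for smooth fields.) -/

import Mathlib

open Matrix

/-- Jacobian matrix of a vector field on ℝ³ in Cartesian coordinates. -/
noncomputable def jacobian (v : (Fin 3 → ℝ) → (Fin 3 → ℝ)) (x : Fin 3 → ℝ) :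
    Matrix (Fin 3) (Fin 3) ℝ :=
  Matrix.of fun i j => fderiv ℝ v x (Pi.single j 1) i

/-- Divergence of a vector field on ℝ³. -/
noncomputable def div3 (v : (Fin 3 → ℝ) → (Fin 3 → ℝ)) (x : Fin 3 → ℝ) : ℝ :=
  ∑ i : Fin 3, fderiv ℝ v x (Pi.single i 1) i

/-!
Write `φ = id + θ` and `A = Dφ = I + Dθ`, so that the field is `adj A · (u ∘ φ)`. By the product
rule its divergence is `∑ⱼ (∑ᵢ ∂ᵢ (adj A)ᵢⱼ) (uⱼ ∘ φ) + tr (adj A · D(u ∘ φ))`. The first term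
vanishes by the Piola identity: in dimension three the columns of `adj Dφ` are cross products
`∇φⱼ₊₁ × ∇φⱼ₊₂` of gradients, which are divergence free because second derivatives commute. By
the chain rule the second term is `tr (adj A · (Du ∘ φ) · A) = tr (A · adj A · (Du ∘ φ))
= det A · (div u ∘ φ)`.
-/

lemma jacobian_eq_toMatrix' (v : (Fin 3 → ℝ) → (Fin 3 → ℝ)) (x : Fin 3 → ℝ) :
    jacobian v x = LinearMap.toMatrix' (fderiv ℝ v x : (Fin 3 → ℝ) →ₗ[ℝ] Fin 3 → ℝ) := by
  ext i j
  simp [jacobian, LinearMap.toMatrix'_apply]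

lemma div3_eq_trace_jacobian (v : (Fin 3 → ℝ) → (Fin 3 → ℝ)) (x : Fin 3 → ℝ) :
    div3 v x = (jacobian v x).trace := rfl

section

variable {φ θ u v : (Fin 3 → ℝ) → (Fin 3 → ℝ)} {x : Fin 3 → ℝ}

lemma jacobian_comp (hu : DifferentiableAt ℝ u (φ x)) (hφ : DifferentiableAt ℝ φ x) :
    jacobian (u ∘ φ) x = jacobian u (φ x) * jacobian φ x := by
  rw [jacobian_eq_toMatrix', jacobian_eq_toMatrix', jacobian_eq_toMatrix', fderiv_comp x hu hφ,
    ContinuousLinearMap.toLinearMap_comp, LinearMap.toMatrix'_comp]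

lemma jacobian_id_add (hθ : DifferentiableAt ℝ θ x) :
    jacobian (fun y => y + θ y) x = 1 + jacobian θ x := by
  rw [jacobian_eq_toMatrix', jacobian_eq_toMatrix', fderiv_fun_add differentiableAt_fun_id hθ,
    fderiv_fun_id, ContinuousLinearMap.toLinearMap_add, map_add, ContinuousLinearMap.coe_id,
    LinearMap.toMatrix'_id]

lemma hasFDerivAt_jacobian_apply (hφ : DifferentiableAt ℝ (fderiv ℝ φ) x) (a b : Fin 3) :
    HasFDerivAt (fun y => jacobian φ y a b)
      (((ContinuousLinearMap.proj a).comp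
        (ContinuousLinearMap.apply ℝ (Fin 3 → ℝ) (Pi.single b 1))).comp
          (fderiv ℝ (fderiv ℝ φ) x)) x := by
  exact ((ContinuousLinearMap.proj a).comp
    (ContinuousLinearMap.apply ℝ (Fin 3 → ℝ) (Pi.single b 1))).hasFDerivAt.comp x hφ.hasFDerivAt

/-- Column `j` of `adjugate A` is the cross product of rows `j + 1` and `j + 2` of `A`. -/
lemma adjugate_fin_three_apply {R : Type*} [CommRing R] (A : Matrix (Fin 3) (Fin 3) R)
    (i j : Fin 3) :
    adjugate A i j =
      A (j + 1) (i + 1) * A (j + 2) (i + 2) - A (j + 1) (i + 2) * A (j + 2) (i + 1) := by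
  fin_cases i <;> fin_cases j <;> simp [adjugate_fin_three] <;> ring

lemma differentiableAt_fderiv_of_contDiffAt_two (hφ : ContDiffAt ℝ 2 φ x) :
    DifferentiableAt ℝ (fderiv ℝ φ) x :=
  (hφ.fderiv_right (m := 1) le_rfl).differentiableAt one_ne_zero

/-- `div (∇φ_p × ∇φ_q) = 0`: the summands cancel in pairs by the symmetry of `D²φ x`. -/
lemma sum_fderiv_cross_jacobian_rows_eq_zero (hφ : ContDiffAt ℝ 2 φ x) (p q : Fin 3) :
    ∑ i : Fin 3, fderiv ℝ (fun y => jacobian φ y p (i + 1) * jacobian φ y q (i + 2)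
      - jacobian φ y p (i + 2) * jacobian φ y q (i + 1)) x (Pi.single i 1) = 0 := by
  have hsymm := hφ.isSymmSndFDerivAt (by simp [minSmoothness_of_isRCLikeNormedField])
  have hD := hasFDerivAt_jacobian_apply (differentiableAt_fderiv_of_contDiffAt_two hφ)
  have hcross : ∀ i : Fin 3, _ := fun i => (((hD p (i + 1)).fun_mul (hD q (i + 2))).fun_sub
    ((hD p (i + 2)).fun_mul (hD q (i + 1)))).fderiv
  rw [Fin.sum_univ_three, hcross, hcross, hcross]
  simp only [_root_.sub_apply, _root_.add_apply, _root_.smul_apply,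
    ContinuousLinearMap.comp_apply, ContinuousLinearMap.apply_apply,
    ContinuousLinearMap.proj_apply, smul_eq_mul, Fin.reduceAdd]
  rw [hsymm (Pi.single 1 1) (Pi.single 0 1), hsymm (Pi.single 2 1) (Pi.single 0 1),
    hsymm (Pi.single 2 1) (Pi.single 1 1)]
  ring

lemma differentiableAt_adjugate_jacobian_apply (hφ : ContDiffAt ℝ 2 φ x) (i j : Fin 3) :
    DifferentiableAt ℝ (fun y => adjugate (jacobian φ y) i j) x := by
  have hD a b := (hasFDerivAt_jacobian_apply
    (differentiableAt_fderiv_of_contDiffAt_two hφ) a b).differentiableAt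
  simp only [adjugate_fin_three_apply]
  exact ((hD _ _).fun_mul (hD _ _)).fun_sub ((hD _ _).fun_mul (hD _ _))

theorem sum_fderiv_adjugate_jacobian_eq_zero (hφ : ContDiffAt ℝ 2 φ x) (j : Fin 3) :
    ∑ i : Fin 3, fderiv ℝ (fun y => adjugate (jacobian φ y) i j) x (Pi.single i 1) = 0 := by
  simp only [adjugate_fin_three_apply]
  exact sum_fderiv_cross_jacobian_rows_eq_zero hφ (j + 1) (j + 2)

lemma div3_mulVec {M : (Fin 3 → ℝ) → Matrix (Fin 3) (Fin 3) ℝ}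
    (hM : ∀ i j, DifferentiableAt ℝ (fun y => M y i j) x) (hv : DifferentiableAt ℝ v x) :
    div3 (fun y => M y *ᵥ v y) x =
      ∑ j, (∑ i, fderiv ℝ (fun y => M y i j) x (Pi.single i 1)) * v x j +
        (M x * jacobian v x).trace := by
  have hv' j : HasFDerivAt (fun y => v y j) ((ContinuousLinearMap.proj j).comp (fderiv ℝ v x)) x :=
    hasFDerivAt_pi'.1 hv.hasFDerivAt j
  have hcomp i : HasFDerivAt (fun y => (M y *ᵥ v y) i)
      (∑ j, (M x i j • (ContinuousLinearMap.proj j).comp (fderiv ℝ v x) +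
        v x j • fderiv ℝ (fun y => M y i j) x)) x := by
    simp only [mulVec, dotProduct]
    exact HasFDerivAt.fun_sum fun j _ => (hM i j).hasFDerivAt.fun_mul (hv' j)
  rw [div3, (hasFDerivAt_pi.2 hcomp).fderiv]
  simp only [trace, diag, mul_apply, jacobian, of_apply, ContinuousLinearMap.pi_apply,
    _root_.sum_apply, _root_.add_apply, _root_.smul_apply, ContinuousLinearMap.comp_apply,
    ContinuousLinearMap.proj_apply, smul_eq_mul, Finset.sum_add_distrib, Finset.sum_mul]
  rw [add_comm, Finset.sum_comm]
  congr 1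
  exact Finset.sum_congr rfl fun j _ => Finset.sum_congr rfl fun i _ => mul_comm _ _

end

lemma trace_adjugate_mul_mul_self {n R : Type*} [Fintype n] [DecidableEq n] [CommRing R]
    (A B : Matrix n n R) : (adjugate A * (B * A)).trace = A.det * B.trace := by
  rw [trace_mul_comm, Matrix.mul_assoc, mul_adjugate, Matrix.mul_smul, Matrix.mul_one,
    trace_smul, smul_eq_mul]

theorem stmt_9 (θ u : (Fin 3 → ℝ) → (Fin 3 → ℝ))
    (hθ : ContDiff ℝ 2 θ) (hu : ContDiff ℝ 1 u)
    (hinv : ∀ y, IsUnit ((1 : Matrix (Fin 3) (Fin 3) ℝ) + jacobian θ y).det)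
    (x : Fin 3 → ℝ) :
    div3 (fun y => ((1 : Matrix (Fin 3) (Fin 3) ℝ) + jacobian θ y).det •
            (((1 : Matrix (Fin 3) (Fin 3) ℝ) + jacobian θ y)⁻¹ *ᵥ u (y + θ y))) x
      = ((1 : Matrix (Fin 3) (Fin 3) ℝ) + jacobian θ x).det * div3 u (x + θ x) := by
  set φ : (Fin 3 → ℝ) → (Fin 3 → ℝ) := fun y => y + θ y
  have hφ : ContDiff ℝ 2 φ := contDiff_id.add hθ
  have hjac y : jacobian φ y = 1 + jacobian θ y :=
    jacobian_id_add ((hθ.differentiable two_ne_zero).differentiableAt)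
  have hfield : (fun y => (1 + jacobian θ y).det • ((1 + jacobian θ y)⁻¹ *ᵥ u (φ y))) =
      fun y => adjugate (jacobian φ y) *ᵥ (u ∘ φ) y := by
    ext1 y
    rw [hjac, det_smul_inv_mulVec_eq_cramer _ _ (hinv y),
      cramer_eq_adjugate_mulVec, Function.comp_apply]
  have hud : DifferentiableAt ℝ u (φ x) := (hu.differentiable one_ne_zero).differentiableAt
  have hφd : DifferentiableAt ℝ φ x := (hφ.differentiable two_ne_zero).differentiableAt
  have hpiola j : (∑ i : Fin 3, fderiv ℝ (fun y => adjugate (jacobian φ y) i j) x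
      (Pi.single i 1)) * (u ∘ φ) x j = 0 := by
    rw [sum_fderiv_adjugate_jacobian_eq_zero hφ.contDiffAt j, zero_mul]
  rw [hfield, div3_mulVec (differentiableAt_adjugate_jacobian_apply hφ.contDiffAt)
      (hud.comp x hφd), Finset.sum_eq_zero fun j _ => hpiola j, zero_add,
    jacobian_comp hud hφd, trace_adjugate_mul_mul_self, hjac, div3_eq_trace_jacobian]
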